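/- arXiv:2008.03730 — 5 statements merged into one kernel-verified Lean document; each statement's English description precedes it below -/
import Mathlib

section
/- Let G be a bipartite graph with parts A and B, each of size n. Then β(G) ≥ ⌊(1/2)·∑_{v ∈ A ∪ B} 1/(d(v)+1)⌋, where d(v) denotes the degree of vertex v in G. -/
/-!
Let `S` consist of `t` vertices of `A` of smallest degree and put `C = max_{v ∈ S} (d(v) + 1)`.
Bounding `C/(d(v)+1)` by `C - d(v)` on `S` and by `1` off `S` shows that
`t ≤ ∑_{v ∈ A} 1/(d(v)+1)` forces `∑_{v ∈ S} (d(v) + 1) ≤ |A|`. Then `S` has at most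
`|A| - t` neighbours, so `t` vertices of `B` have no edge to `S`. Applying this to whichever
side carries at least half of the total weight `∑_v 1/(d(v)+1)` gives the bound.
-/

open Finset

/-- The bi-hole number `β(G)` of a bipartite graph `G` with parts `A`, `B`: the largest `k`
such that there are `S ⊆ A`, `T ⊆ B` with `|S| = |T| = k` and no edge of `G` between
`S` and `T`. -/
noncomputable def biholeNumber {V : Type*} (G : SimpleGraph V) (A B : Finset V) : ℕ :=
  sSup {k | ∃ S T : Finset V, S ⊆ A ∧ T ⊆ B ∧ S.card = k ∧ T.card = k ∧
    ∀ s ∈ S, ∀ t ∈ T, ¬ G.Adj s t}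

namespace Finset

theorem exists_subset_card_eq_forall_le_sdiff {ι α : Type*} [DecidableEq ι] [LinearOrder α]
    (f : ι → α) {A : Finset ι} {t : ℕ} (ht : t ≤ #A) :
    ∃ S ⊆ A, #S = t ∧ ∀ v ∈ S, ∀ u ∈ A \ S, f v ≤ f u := by
  induction t with
  | zero => exact ⟨∅, empty_subset _, card_empty, by simp⟩
  | succ t ih =>
    obtain ⟨S, hSA, hSt, hS⟩ := ih (by omega)
    have hrest : (A \ S).Nonempty := by
      rw [← card_pos, card_sdiff_of_subset hSA]; omega
    obtain ⟨u, hu, hu_min⟩ := (A \ S).exists_min_image f hrest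
    have huS : u ∉ S := (mem_sdiff.mp hu).2
    refine ⟨insert u S, insert_subset (mem_sdiff.mp hu).1 hSA,
      by rw [card_insert_of_notMem huS, hSt], fun v hv w hw => ?_⟩
    have hw' : w ∈ A \ S := sdiff_subset_sdiff subset_rfl (subset_insert u S) hw
    rcases mem_insert.mp hv with rfl | hv
    · exact hu_min w hw'
    · exact hS v hv w hw'

end Finset

lemma div_le_add_one_sub {x C : ℝ} (hx : 1 ≤ x) (hxC : x ≤ C) : C / x ≤ C + 1 - x := by
  rw [div_le_iff₀ (by linarith)]
  nlinarith

theorem sum_le_card_of_card_le_sum_inv {ι : Type*} [DecidableEq ι] {A S : Finset ι}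
    (hSA : S ⊆ A) {x : ι → ℝ} (hx : ∀ v ∈ A, 1 ≤ x v) {C : ℝ} (hC : 0 ≤ C)
    (hS : ∀ v ∈ S, x v ≤ C) (hAS : ∀ u ∈ A \ S, C ≤ x u)
    (hcard : (#S : ℝ) ≤ ∑ v ∈ A, 1 / x v) :
    ∑ v ∈ S, x v ≤ #A := by
  have h_in : ∑ v ∈ S, C / x v ≤ ∑ v ∈ S, (C + 1 - x v) :=
    sum_le_sum fun v hv => div_le_add_one_sub (hx v (hSA hv)) (hS v hv)
  have h_out : ∑ u ∈ A \ S, C / x u ≤ ∑ u ∈ A \ S, (1 : ℝ) := sum_le_sum fun u hu =>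
    (div_le_one (by linarith [hx u (mem_sdiff.mp hu).1])).mpr (hAS u hu)
  have h_split : ∑ v ∈ A, C / x v = ∑ u ∈ A \ S, C / x u + ∑ v ∈ S, C / x v :=
    (sum_sdiff hSA).symm
  have h_total : C * #S ≤ ∑ v ∈ A, C / x v := by
    simp_rw [div_eq_mul_one_div C]
    rw [← mul_sum]
    exact mul_le_mul_of_nonneg_left hcard hC
  simp only [sum_sub_distrib, sum_add_distrib, sum_const, nsmul_eq_mul, mul_one,
    card_sdiff_of_subset hSA] at h_in h_out
  rw [Nat.cast_sub (card_le_card hSA)] at h_out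
  linarith

theorem exists_subset_card_eq_sum_add_one_le {ι : Type*} [DecidableEq ι] (f : ι → ℕ)
    {A : Finset ι} {t : ℕ}
    (ht : (t : ℝ) ≤ ∑ v ∈ A, 1 / ((f v : ℝ) + 1)) :
    ∃ S ⊆ A, #S = t ∧ ∑ v ∈ S, (f v + 1) ≤ #A := by
  have htA : t ≤ #A := by
    have : ∑ v ∈ A, 1 / ((f v : ℝ) + 1) ≤ ∑ v ∈ A, (1 : ℝ) := sum_le_sum fun v _ =>
      div_le_one_of_le₀ (by linarith [(f v).cast_nonneg (α := ℝ)]) (by positivity)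
    exact_mod_cast ht.trans (this.trans_eq (by simp) : _ ≤ (#A : ℝ))
  obtain ⟨S, hSA, hSt, hS⟩ := exists_subset_card_eq_forall_le_sdiff f htA
  refine ⟨S, hSA, hSt, ?_⟩
  have := sum_le_card_of_card_le_sum_inv hSA (x := fun v => (f v : ℝ) + 1)
    (fun v _ => by simp) (C := ((S.sup (f · + 1) : ℕ) : ℝ)) (Nat.cast_nonneg _)
    (fun v hv => by exact_mod_cast le_sup (f := (f · + 1)) hv)
    (fun u hu => by exact_mod_cast Finset.sup_le fun v hv => Nat.succ_le_succ (hS v hv u hu))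
    (by rwa [hSt])
  exact_mod_cast this

namespace SimpleGraph

variable {V : Type*} (G : SimpleGraph V)

lemma le_biholeNumber {A B S T : Finset V} {k : ℕ} (hSA : S ⊆ A) (hTB : T ⊆ B)
    (hS : #S = k) (hT : #T = k) (h : ∀ s ∈ S, ∀ t ∈ T, ¬ G.Adj s t) :
    k ≤ biholeNumber G A B :=
  le_csSup ⟨#A, fun _ ⟨_, _, hSA, _, hS, _⟩ => hS ▸ card_le_card hSA⟩
    ⟨S, T, hSA, hTB, hS, hT, h⟩

lemma biholeNumber_comm (A B : Finset V) : biholeNumber G B A = biholeNumber G A B := by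
  unfold biholeNumber
  congr 1
  ext k
  constructor <;> rintro ⟨S, T, hS, hT, hSk, hTk, h⟩ <;>
    exact ⟨T, S, hT, hS, hTk, hSk, fun t ht s hs hts => h s hs t ht hts.symm⟩

variable [DecidableEq V] [G.LocallyFinite]

theorem le_biholeNumber_of_le_sum_inv_degree {A B : Finset V} (hAB : #A ≤ #B) {t : ℕ}
    (ht : (t : ℝ) ≤ ∑ v ∈ A, 1 / ((G.degree v : ℝ) + 1)) :
    t ≤ biholeNumber G A B := by
  obtain ⟨S, hSA, hSt, hS⟩ := exists_subset_card_eq_sum_add_one_le (fun v => G.degree v) ht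
  set N := S.biUnion fun v => G.neighborFinset v
  have hN : #N + t ≤ #A := calc
    #N + t ≤ ∑ v ∈ S, G.degree v + #S := by
      rw [hSt]; exact Nat.add_le_add_right card_biUnion_le t
    _ = ∑ v ∈ S, (G.degree v + 1) := by rw [sum_add_distrib, card_eq_sum_ones]
    _ ≤ #A := hS
  obtain ⟨T, hT, hTt⟩ := exists_subset_card_eq (show t ≤ #(B \ N) by
    have := le_card_sdiff N B; omega)
  refine le_biholeNumber G hSA (hT.trans sdiff_subset) hSt hTt fun s hs u hu hsu => ?_
  exact (mem_sdiff.mp (hT hu)).2 (mem_biUnion.mpr ⟨s, hs, (mem_neighborFinset G s u).mpr hsu⟩)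

end SimpleGraph

theorem bihole_caro_wei_general {V : Type*} [Fintype V] [DecidableEq V]
    (G : SimpleGraph V) [DecidableRel G.Adj] (n : ℕ) (A B : Finset V)
    (hA : A.card = n) (hB : B.card = n) :
    ⌊(1 / 2 : ℝ) * ∑ v ∈ A ∪ B, (1 : ℝ) / (G.degree v + 1)⌋ ≤ (biholeNumber G A B : ℤ) := by
  set W : Finset V → ℝ := fun s => ∑ v ∈ s, (1 : ℝ) / (G.degree v + 1)
  have hW : ∀ s, 0 ≤ W s := fun s => sum_nonneg fun v _ => by positivity
  have hx : 0 ≤ (1 / 2 : ℝ) * W (A ∪ B) := mul_nonneg (by norm_num) (hW _)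
  have hunion : W (A ∪ B) ≤ W A + W B := by
    have := sum_union_inter (s₁ := A) (s₂ := B) (f := fun v => (1 : ℝ) / (G.degree v + 1))
    linarith [hW (A ∩ B)]
  have hfloor := Nat.floor_le hx
  rw [← Int.natCast_floor_eq_floor hx, Nat.cast_le]
  rcases le_total (W B) (W A) with hBA | hAB
  · exact G.le_biholeNumber_of_le_sum_inv_degree (hA.trans hB.symm).le (by linarith)
  · rw [← G.biholeNumber_comm]
    exact G.le_biholeNumber_of_le_sum_inv_degree (hB.trans hA.symm).le (by linarith)

/-- For an `n × n` bipartite graph `G` with parts `A` and `B`,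
`β(G) ≥ ⌊(1/2) · ∑_{v ∈ A ∪ B} 1/(d(v)+1)⌋`. -/
theorem bihole_caro_wei {V : Type*} [Fintype V] [DecidableEq V]
    (G : SimpleGraph V) [DecidableRel G.Adj] (n : ℕ) (A B : Finset V)
    (hdisj : Disjoint A B) (hcover : A ∪ B = Finset.univ)
    (hbip : ∀ u v, G.Adj u v → (u ∈ A ∧ v ∈ B) ∨ (u ∈ B ∧ v ∈ A))
    (hA : A.card = n) (hB : B.card = n) :
    ⌊(1 / 2 : ℝ) * ∑ v ∈ A ∪ B, (1 : ℝ) / (G.degree v + 1)⌋ ≤ (biholeNumber G A B : ℤ) :=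
  bihole_caro_wei_general G n A B hA hB
end

section
/- Let G be a bipartite graph with parts A and B, each of size n ≥ 1, let Δ_A be the maximum degree in G among vertices of A and Δ_B the maximum degree in G among vertices of B. Then β(G) ≥ (1/2)·(1/(Δ_A+1) + 1/(Δ_B+1) + ∑_{v ∈ A ∪ B} 1/(d(v)+1)) − 1. -/
/-!
Write `c_X = ∑_{v ∈ X} 1 / (d(v) + 1) + 1 / (Δ_X + 1)` for a side `X`. The bound is at most
`max (c_A, c_B) - 1`, so it suffices to find a bi-hole of size `t` for every integer `t < c_X`.
Let `S` consist of `t` vertices of `X` of smallest degree and `M = max_{v ∈ S} (d(v) + 1)`.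
Bounding `1 / (d(v) + 1)` by the chord `1 - d(v) / M` on `S`, by `1 / M` off `S`, and
`1 / (Δ_X + 1)` by `1 / M` gives `c_X ≤ t + (n + 1 - ∑_{v ∈ S} (d(v) + 1)) / M`, hence
`∑_{v ∈ S} (d(v) + 1) ≤ n`. So `S` has at most `n - t` neighbours on the other side, and `t`
of the remaining vertices complete the bi-hole.
-/

open Finset

theorem Finset.exists_subset_card_eq_forall_le_of_mem_sdiff {α β : Type*} [DecidableEq α]
    [LinearOrder β] (f : α → β) {A : Finset α} {t : ℕ} (ht : t ≤ #A) :
    ∃ S ⊆ A, #S = t ∧ ∀ x ∈ S, ∀ y ∈ A \ S, f x ≤ f y := by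
  induction t with
  | zero => exact ⟨∅, empty_subset A, card_empty, by simp⟩
  | succ t ih =>
    obtain ⟨S, hSA, hSt, hS⟩ := ih (by omega)
    have hrest : (A \ S).Nonempty := by
      rw [← card_pos, card_sdiff_of_subset hSA]
      omega
    obtain ⟨m, hm, hmin⟩ := exists_min_image (A \ S) f hrest
    have hmS : m ∉ S := (mem_sdiff.mp hm).2
    refine ⟨insert m S, insert_subset (mem_sdiff.mp hm).1 hSA,
      by rw [card_insert_of_notMem hmS, hSt], fun x hx y hy => ?_⟩
    have hyS : y ∈ A \ S := by grind
    rcases mem_insert.mp hx with rfl | hxS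
    · exact hmin y hyS
    · exact hS x hxS y hyS

theorem one_div_le_one_sub_div {x M : ℝ} (hx : 1 ≤ x) (hxM : x ≤ M) :
    1 / x ≤ 1 - (x - 1) / M := by
  have hx0 : 0 < x := by linarith
  have hM0 : 0 < M := by linarith
  rw [div_le_iff₀ hx0, sub_mul, div_mul_eq_mul_div, le_sub_iff_add_le, ← le_sub_iff_add_le',
    div_le_iff₀ hM0]
  nlinarith

theorem sum_one_div_add_one_div_le {α : Type*} [DecidableEq α] {A S : Finset α} {g : α → ℝ}
    {M D : ℝ} (hSA : S ⊆ A) (hg : ∀ x ∈ S, 1 ≤ g x) (hgM : ∀ x ∈ S, g x ≤ M)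
    (hMg : ∀ y ∈ A \ S, M ≤ g y) (hM : 0 < M) (hMD : M ≤ D) :
    ∑ v ∈ A, 1 / g v + 1 / D ≤ #S + (#A + 1 - ∑ v ∈ S, g v) / M := by
  have hS : ∑ v ∈ S, 1 / g v ≤ ∑ v ∈ S, (1 - (g v - 1) / M) :=
    sum_le_sum fun x hx => one_div_le_one_sub_div (hg x hx) (hgM x hx)
  have hAS : ∑ v ∈ A \ S, 1 / g v ≤ ∑ v ∈ A \ S, 1 / M :=
    sum_le_sum fun y hy => one_div_le_one_div_of_le hM (hMg y hy)
  have hD : 1 / D ≤ 1 / M := one_div_le_one_div_of_le hM hMD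
  have hcard : (#(A \ S) : ℝ) = #A - #S := by
    rw [card_sdiff_of_subset hSA, Nat.cast_sub (card_le_card hSA)]
  rw [← sum_sdiff hSA]
  simp only [sum_sub_distrib, sum_const, nsmul_eq_mul, mul_one, ← sum_div, hcard] at hS hAS
  have key : (#A + 1 - ∑ v ∈ S, g v) / M
      = (#A - #S) * (1 / M) + 1 / M - (∑ v ∈ S, g v - #S) / M := by
    field_simp
    ring
  linarith

theorem exists_subset_card_eq_sum_lt {α : Type*} [DecidableEq α] {A : Finset α} {g : α → ℝ}
    {D : ℝ} {t : ℕ} (hg : ∀ v ∈ A, 1 ≤ g v) (hgD : ∀ v ∈ A, g v ≤ D) (hD : 1 ≤ D)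
    (ht : t < ∑ v ∈ A, 1 / g v + 1 / D) :
    ∃ S ⊆ A, #S = t ∧ ∑ v ∈ S, g v < #A + 1 := by
  have htA : t ≤ #A := by
    have hsum : ∑ v ∈ A, 1 / g v ≤ #A := by
      simpa using sum_le_sum fun v hv => (div_le_one (by linarith [hg v hv])).mpr (hg v hv)
    have hD' : 1 / D ≤ 1 := (div_le_one (by linarith)).mpr hD
    have : (t : ℝ) < #A + 1 := by linarith
    exact Nat.lt_add_one_iff.mp (by exact_mod_cast this)
  obtain ⟨S, hSA, hSt, hS⟩ := exists_subset_card_eq_forall_le_of_mem_sdiff g htA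
  refine ⟨S, hSA, hSt, ?_⟩
  subst hSt
  rcases S.eq_empty_or_nonempty with rfl | hne
  · simp only [sum_empty]
    positivity
  obtain ⟨u, hu, hMu⟩ := exists_mem_eq_sup' hne g
  have hM1 : 1 ≤ S.sup' hne g := hMu ▸ hg u (hSA hu)
  have hbound := sum_one_div_add_one_div_le hSA (fun x hx => hg x (hSA hx))
    (fun x hx => le_sup' g hx) (fun y hy => hMu ▸ hS u hu y hy) (by linarith)
    (hMu ▸ hgD u (hSA hu))
  by_contra! hP
  have : (#A + 1 - ∑ v ∈ S, g v) / S.sup' hne g ≤ 0 :=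
    div_nonpos_of_nonpos_of_nonneg (by linarith) (by linarith)
  linarith

namespace SimpleGraph

variable {V : Type*} [Fintype V] [DecidableEq V] (G : SimpleGraph V) [DecidableRel G.Adj]

theorem exists_subset_card_eq_forall_not_adj {S Y : Finset V}
    (h : ∑ v ∈ S, (G.degree v + 1) ≤ #Y) :
    ∃ T ⊆ Y, #T = #S ∧ ∀ s ∈ S, ∀ u ∈ T, ¬ G.Adj s u := by
  set N := S.biUnion fun v => G.neighborFinset v
  have hN : #N ≤ ∑ v ∈ S, G.degree v :=
    card_biUnion_le.trans_eq (sum_congr rfl fun v _ => G.card_neighborFinset_eq_degree v)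
  have hS : #S ≤ #(Y \ N) := by
    rw [sum_add_distrib, sum_const, smul_eq_mul, mul_one] at h
    have := le_card_sdiff N Y
    omega
  obtain ⟨T, hTY, hTS⟩ := exists_subset_card_eq hS
  refine ⟨T, hTY.trans sdiff_subset, hTS, fun s hs u hu hsu => ?_⟩
  exact (mem_sdiff.mp (hTY hu)).2 (mem_biUnion.mpr ⟨s, hs, (G.mem_neighborFinset s u).mpr hsu⟩)

theorem exists_bihole_of_lt {X Y : Finset V} {t : ℕ} (hXY : #X ≤ #Y)
    (ht : (t : ℝ) < ∑ v ∈ X, 1 / ((G.degree v : ℝ) + 1)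
      + 1 / ((X.sup (fun v => G.degree v) : ℕ) + 1)) :
    ∃ S ⊆ X, ∃ T ⊆ Y, #S = t ∧ #T = t ∧ ∀ s ∈ S, ∀ u ∈ T, ¬ G.Adj s u := by
  obtain ⟨S, hSX, hSt, hS⟩ :=
    exists_subset_card_eq_sum_lt (g := fun v => (G.degree v : ℝ) + 1) (fun v _ => by simp)
    (fun v hv => by exact_mod_cast Nat.add_le_add_right (le_sup (f := fun v => G.degree v) hv) 1)
    (by simp) ht
  have hSY : ∑ v ∈ S, (G.degree v + 1) ≤ #Y := by
    have : ∑ v ∈ S, (G.degree v + 1) < #X + 1 := by exact_mod_cast hS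
    omega
  obtain ⟨T, hTY, hTS, hST⟩ := G.exists_subset_card_eq_forall_not_adj hSY
  exact ⟨S, hSX, T, hTY, hSt, hTS.trans hSt, hST⟩

end SimpleGraph

theorem le_biholeNumber {V : Type*} (G : SimpleGraph V) {A B S T : Finset V} {k : ℕ}
    (hSA : S ⊆ A) (hTB : T ⊆ B) (hS : #S = k) (hT : #T = k)
    (hST : ∀ s ∈ S, ∀ t ∈ T, ¬ G.Adj s t) :
    k ≤ biholeNumber G A B := by
  refine le_csSup ⟨#A, ?_⟩ ⟨S, T, hSA, hTB, hS, hT, hST⟩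
  rintro m ⟨S', -, hS'A, -, rfl, -, -⟩
  exact card_le_card hS'A

theorem bihole_caro_wei_strong_general {V : Type*} [Fintype V] [DecidableEq V]
    (G : SimpleGraph V) [DecidableRel G.Adj] (n : ℕ) (A B : Finset V)
    (hdisj : Disjoint A B) (hA : A.card = n) (hB : B.card = n) :
    (1 / 2 : ℝ) * ((1 : ℝ) / ((A.sup (fun v => G.degree v) : ℕ) + 1) + (1 : ℝ) / ((B.sup (fun v => G.degree v) : ℕ) + 1)
        + ∑ v ∈ A ∪ B, (1 : ℝ) / (G.degree v + 1)) - 1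
      ≤ (biholeNumber G A B : ℝ) := by
  by_contra! h
  rw [sum_union hdisj] at h
  set β := biholeNumber G A B
  have hβ : ((β + 1 : ℕ) : ℝ) < ∑ v ∈ A, 1 / ((G.degree v : ℝ) + 1)
        + 1 / ((A.sup (fun v => G.degree v) : ℕ) + 1) ∨
      ((β + 1 : ℕ) : ℝ) < ∑ v ∈ B, 1 / ((G.degree v : ℝ) + 1)
        + 1 / ((B.sup (fun v => G.degree v) : ℕ) + 1) := by
    by_contra! hle
    push_cast at hle
    linarith
  rcases hβ with hlt | hlt
  · obtain ⟨S, hSA, T, hTB, hS, hT, hST⟩ := G.exists_bihole_of_lt (hA.trans hB.symm).le hlt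
    have := le_biholeNumber G hSA hTB hS hT hST
    omega
  · obtain ⟨S, hSB, T, hTA, hS, hT, hST⟩ := G.exists_bihole_of_lt (hB.trans hA.symm).le hlt
    have := le_biholeNumber G hTA hSB hT hS fun t ht s hs hts => hST s hs t ht hts.symm
    omega

/-- For an `n × n` bipartite graph `G` (with `n ≥ 1`), with `Δ_A` and `Δ_B`
the maximum degrees on the two sides,
`β(G) ≥ (1/2)·(1/(Δ_A+1) + 1/(Δ_B+1) + ∑_{v ∈ A ∪ B} 1/(d(v)+1)) − 1`. -/
theorem bihole_caro_wei_strong {V : Type*} [Fintype V] [DecidableEq V]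
    (G : SimpleGraph V) [DecidableRel G.Adj] (n : ℕ) (hn : 1 ≤ n) (A B : Finset V)
    (hdisj : Disjoint A B) (hcover : A ∪ B = Finset.univ)
    (hbip : ∀ u v, G.Adj u v → (u ∈ A ∧ v ∈ B) ∨ (u ∈ B ∧ v ∈ A))
    (hA : A.card = n) (hB : B.card = n) :
    (1 / 2 : ℝ) * ((1 : ℝ) / ((A.sup (fun v => G.degree v) : ℕ) + 1) + (1 : ℝ) / ((B.sup (fun v => G.degree v) : ℕ) + 1)
        + ∑ v ∈ A ∪ B, (1 : ℝ) / (G.degree v + 1)) - 1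
      ≤ (biholeNumber G A B : ℝ) :=
  bihole_caro_wei_strong_general G n A B hdisj hA hB
end

section
/- Let G be a bipartite graph with parts A and B, each of size n ≥ 2, let Δ_A = max_{v ∈ A} d(v) ≥ 1 and Δ_B = max_{v ∈ B} d(v) ≥ 1. Suppose a ∈ A satisfies d(a) = Δ_A, b ∈ B satisfies d(b) = Δ_B, and a is not adjacent to b. Let H be the (n−1) × (n−1) bipartite graph obtained from G by deleting a and b, with parts A' = A \ {a}, B' = B \ {b}, maximum degrees Δ_{A'}, Δ_{B'} and degrees d'(v). Then (1/2)·(1/(Δ_{A'}+1) + 1/(Δ_{B'}+1) + ∑_{v ∈ A' ∪ B'} 1/(d'(v)+1)) ≥ (1/2)·(1/(Δ_A+1) + 1/(Δ_B+1) + ∑_{v ∈ A ∪ B} 1/(d(v)+1)). -/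
/-!
Deleting the maximum-degree vertices `a ∈ A` and `b ∈ B` removes the terms `1/(Δ_A+1)` and
`1/(Δ_B+1)` from the sum, but each of the `Δ_B` neighbours of `b` (all in `A \ {a}`) loses one
degree, so its term `1/(d+1)` grows by at least `1/(Δ_A(Δ_A+1))`, and symmetrically on the other
side; the side maxima cannot grow. The net change is then controlled by
`Δ_B/(Δ_A(Δ_A+1)) + Δ_A/(Δ_B(Δ_B+1)) - 1/(Δ_A+1) - 1/(Δ_B+1)
  = (Δ_A-Δ_B)²(Δ_A+Δ_B+1)/(Δ_A(Δ_A+1)Δ_B(Δ_B+1)) ≥ 0`.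
-/

open Finset

lemma one_div_add_one_le_div_add_div {x y : ℝ} (hx : 0 < x) (hy : 0 < y) :
    1 / (x + 1) + 1 / (y + 1) ≤ y / (x * (x + 1)) + x / (y * (y + 1)) := by
  have hdiff : y / (x * (x + 1)) + x / (y * (y + 1)) - (1 / (x + 1) + 1 / (y + 1))
      = (x - y) ^ 2 * (x + y + 1) / (x * (x + 1) * (y * (y + 1))) := by
    field_simp
    ring
  have : 0 ≤ (x - y) ^ 2 * (x + y + 1) / (x * (x + 1) * (y * (y + 1))) := by positivity
  linarith

lemma one_div_mul_succ_le_one_div_sub_one_div {k m : ℕ} (hkm : k + 1 ≤ m) :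
    1 / ((m : ℝ) * (m + 1)) ≤ 1 / ((k : ℝ) + 1) - 1 / (((k + 1 : ℕ) : ℝ) + 1) := by
  have hk : (k : ℝ) + 1 ≤ m := by exact_mod_cast hkm
  rw [show 1 / ((k : ℝ) + 1) - 1 / (((k + 1 : ℕ) : ℝ) + 1) = 1 / ((k + 1) * (k + 1 + 1)) by
    push_cast; field_simp; ring]
  gcongr

lemma ite_le_one_div_card_erase_sub {α : Type*} [DecidableEq α] {s : Finset α} {w : α} {m : ℕ}
    (hsm : #s ≤ m) :
    (if w ∈ s then 1 / ((m : ℝ) * (m + 1)) else 0)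
      ≤ 1 / ((#(s.erase w) : ℝ) + 1) - 1 / ((#s : ℝ) + 1) := by
  split_ifs with hw
  · obtain ⟨k, hk⟩ : ∃ k, #s = k + 1 := ⟨_, (card_erase_add_one hw).symm⟩
    rw [card_erase_of_mem hw, hk, Nat.add_sub_cancel]
    exact one_div_mul_succ_le_one_div_sub_one_div (hk ▸ hsm)
  · simp [erase_eq_of_notMem hw]

section DeleteVertex

variable {V : Type*} [Fintype V] [DecidableEq V] {G : SimpleGraph V} [DecidableRel G.Adj]

lemma degree_div_le_sum_one_div_sub {S : Finset V} {w : V} {m : ℕ} {d' : V → ℕ}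
    (hNS : G.neighborFinset w ⊆ S) (hSm : ∀ v ∈ S, G.degree v ≤ m)
    (hd' : ∀ v ∈ S, d' v = #((G.neighborFinset v).erase w)) :
    (G.degree w : ℝ) / (m * (m + 1))
      ≤ ∑ v ∈ S, (1 / ((d' v : ℝ) + 1) - 1 / ((G.degree v : ℝ) + 1)) := by
  calc (G.degree w : ℝ) / (m * (m + 1))
      = ∑ v ∈ S, if w ∈ G.neighborFinset v then 1 / ((m : ℝ) * (m + 1)) else 0 := by
        simp_rw [SimpleGraph.mem_neighborFinset, G.adj_comm _ w,
          ← SimpleGraph.mem_neighborFinset, sum_ite_mem, inter_eq_right.mpr hNS, sum_const,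
          SimpleGraph.card_neighborFinset_eq_degree, nsmul_eq_mul, mul_one_div]
    _ ≤ _ := by
        gcongr with v hv
        rw [hd' v hv, ← SimpleGraph.card_neighborFinset_eq_degree]
        exact ite_le_one_div_card_erase_sub (by simpa using hSm v hv)

lemma filter_adj_erase_union_erase {A B : Finset V} (hG : G.IsBipartiteWith A B) {a b v : V}
    (hv : v ∈ A) :
    (A.erase a ∪ B.erase b).filter (G.Adj v) = (G.neighborFinset v).erase b := by
  ext u
  simp only [mem_filter, mem_union, mem_erase, SimpleGraph.mem_neighborFinset]
  constructor
  · rintro ⟨⟨_, huA⟩ | ⟨hub, _⟩, hvu⟩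
    · exact absurd (hG.mem_of_mem_adj hv hvu) (disjoint_left.mp (disjoint_coe.mp hG.disjoint) huA)
    · exact ⟨hub, hvu⟩
  · rintro ⟨hub, hvu⟩
    exact ⟨Or.inr ⟨hub, hG.mem_of_mem_adj hv hvu⟩, hvu⟩

lemma neighborFinset_subset_erase {A B : Finset V} (hG : G.IsBipartiteWith A B) {a b : V}
    (hb : b ∈ B) (hab : ¬ G.Adj a b) :
    G.neighborFinset b ⊆ A.erase a := by
  intro v hv
  rw [SimpleGraph.mem_neighborFinset] at hv
  exact mem_erase.mpr ⟨by rintro rfl; exact hab hv.symm, hG.mem_of_mem_adj' hb hv.symm⟩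

end DeleteVertex

theorem potential_case_nonadjacent_general {V : Type*} [Fintype V] [DecidableEq V]
    (G : SimpleGraph V) [DecidableRel G.Adj] (A B : Finset V)
    (hdisj : Disjoint A B)
    (hbip : ∀ u v, G.Adj u v → (u ∈ A ∧ v ∈ B) ∨ (u ∈ B ∧ v ∈ A))
    (hΔA : 1 ≤ A.sup (fun v => G.degree v)) (hΔB : 1 ≤ B.sup (fun v => G.degree v))
    (a : V) (ha : a ∈ A) (hda : G.degree a = A.sup (fun v => G.degree v))
    (b : V) (hb : b ∈ B) (hdb : G.degree b = B.sup (fun v => G.degree v))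
    (hnadj : ¬ G.Adj a b)
    (d' : V → ℕ)
    (hd' : ∀ v, d' v = ((A.erase a ∪ B.erase b).filter (fun u => G.Adj v u)).card) :
    (1 / 2 : ℝ) * ((1 : ℝ) / ((A.sup (fun v => G.degree v) : ℕ) + 1)
        + (1 : ℝ) / ((B.sup (fun v => G.degree v) : ℕ) + 1)
        + ∑ v ∈ A ∪ B, (1 : ℝ) / (G.degree v + 1))
      ≤ (1 / 2 : ℝ) * ((1 : ℝ) / (((A.erase a).sup d' : ℕ) + 1)
        + (1 : ℝ) / (((B.erase b).sup d' : ℕ) + 1)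
        + ∑ v ∈ A.erase a ∪ B.erase b, (1 : ℝ) / (d' v + 1)) := by
  set ΔA := A.sup (fun v => G.degree v)
  set ΔB := B.sup (fun v => G.degree v)
  have hG : G.IsBipartiteWith A B := ⟨disjoint_coe.mpr hdisj, fun u v h => hbip u v h⟩
  have hd'A : ∀ v ∈ A, d' v = #((G.neighborFinset v).erase b) := fun v hv => by
    rw [hd', filter_adj_erase_union_erase hG hv]
  have hd'B : ∀ v ∈ B, d' v = #((G.neighborFinset v).erase a) := fun v hv => by
    rw [hd', union_comm, filter_adj_erase_union_erase hG.symm hv]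
  have gainA := degree_div_le_sum_one_div_sub (neighborFinset_subset_erase hG hb hnadj)
    (fun v hv => le_sup (f := fun v => G.degree v) (mem_of_mem_erase hv))
    (fun v hv => hd'A v (mem_of_mem_erase hv))
  have gainB := degree_div_le_sum_one_div_sub
    (neighborFinset_subset_erase hG.symm ha fun h => hnadj h.symm)
    (fun v hv => le_sup (f := fun v => G.degree v) (mem_of_mem_erase hv))
    (fun v hv => hd'B v (mem_of_mem_erase hv))
  have maxA : (A.erase a).sup d' ≤ ΔA := Finset.sup_le fun v hv => by
    rw [hd'A v (mem_of_mem_erase hv)]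
    exact card_erase_le.trans (le_sup (f := fun v => G.degree v) (mem_of_mem_erase hv))
  have maxB : (B.erase b).sup d' ≤ ΔB := Finset.sup_le fun v hv => by
    rw [hd'B v (mem_of_mem_erase hv)]
    exact card_erase_le.trans (le_sup (f := fun v => G.degree v) (mem_of_mem_erase hv))
  have recA : (1 : ℝ) / (ΔA + 1) ≤ 1 / (((A.erase a).sup d' : ℕ) + 1) := by gcongr
  have recB : (1 : ℝ) / (ΔB + 1) ≤ 1 / (((B.erase b).sup d' : ℕ) + 1) := by gcongr
  have balance := one_div_add_one_le_div_add_div (x := ΔA) (y := ΔB)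
    (by exact_mod_cast hΔA) (by exact_mod_cast hΔB)
  rw [hdb, sum_sub_distrib] at gainA
  rw [hda, sum_sub_distrib] at gainB
  rw [sum_union hdisj, sum_union (hdisj.mono (erase_subset a A) (erase_subset b B)),
    ← add_sum_erase A _ ha, ← add_sum_erase B _ hb, hda, hdb]
  linarith

/-- Case 1 of the induction. Let `G` be an `n × n` bipartite graph (`n ≥ 2`)
with parts `A`, `B`, maximum side degrees `Δ_A, Δ_B ≥ 1`, let `a ∈ A`, `b ∈ B` be
non-adjacent vertices of maximum degree on their sides, and let `H` be the induced subgraph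
on `(A \ {a}) ∪ (B \ {b})` with degrees `d'` and side maximum degrees `Δ_{A'}, Δ_{B'}`.
Then the potential of `H` is at least the potential of `G`. -/
theorem potential_case_nonadjacent {V : Type*} [Fintype V] [DecidableEq V]
    (G : SimpleGraph V) [DecidableRel G.Adj] (n : ℕ) (hn : 2 ≤ n) (A B : Finset V)
    (hdisj : Disjoint A B) (hcover : A ∪ B = Finset.univ)
    (hbip : ∀ u v, G.Adj u v → (u ∈ A ∧ v ∈ B) ∨ (u ∈ B ∧ v ∈ A))
    (hA : A.card = n) (hB : B.card = n)
    (hΔA : 1 ≤ A.sup (fun v => G.degree v)) (hΔB : 1 ≤ B.sup (fun v => G.degree v))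
    (a : V) (ha : a ∈ A) (hda : G.degree a = A.sup (fun v => G.degree v))
    (b : V) (hb : b ∈ B) (hdb : G.degree b = B.sup (fun v => G.degree v))
    (hnadj : ¬ G.Adj a b)
    (d' : V → ℕ)
    (hd' : ∀ v, d' v = ((A.erase a ∪ B.erase b).filter (fun u => G.Adj v u)).card) :
    (1 / 2 : ℝ) * ((1 : ℝ) / ((A.sup (fun v => G.degree v) : ℕ) + 1)
        + (1 : ℝ) / ((B.sup (fun v => G.degree v) : ℕ) + 1)
        + ∑ v ∈ A ∪ B, (1 : ℝ) / (G.degree v + 1))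
      ≤ (1 / 2 : ℝ) * ((1 : ℝ) / (((A.erase a).sup d' : ℕ) + 1)
        + (1 : ℝ) / (((B.erase b).sup d' : ℕ) + 1)
        + ∑ v ∈ A.erase a ∪ B.erase b, (1 : ℝ) / (d' v + 1)) :=
  potential_case_nonadjacent_general G A B hdisj hbip hΔA hΔB a ha hda b hb hdb hnadj d' hd'
end

section
/- Let G be a bipartite graph with parts A and B, each of size n ≥ 2, let Δ_A = max_{v ∈ A} d(v) ≥ 1 and Δ_B = max_{v ∈ B} d(v) ≥ 1. Suppose that every vertex a ∈ A with d(a) = Δ_A is adjacent to every vertex b ∈ B with d(b) = Δ_B. Fix such a and b, and let H be the (n−1) × (n−1) bipartite graph obtained from G by deleting a and b, with parts A' = A \ {a}, B' = B \ {b}, maximum degrees Δ_{A'}, Δ_{B'} and degrees d'(v). Then Δ_{A'} ≤ Δ_A − 1, Δ_{B'} ≤ Δ_B − 1, and (1/2)·(1/(Δ_{A'}+1) + 1/(Δ_{B'}+1) + ∑_{v ∈ A' ∪ B'} 1/(d'(v)+1)) ≥ (1/2)·(1/(Δ_A+1) + 1/(Δ_B+1) + ∑_{v ∈ A ∪ B}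 1/(d(v)+1)). -/
/-!
Deleting `a` and `b` lowers by one exactly the degrees of the `Δ_B - 1` other neighbours of `b`
in `A` and of the `Δ_A - 1` other neighbours of `a` in `B`. Every maximum-degree vertex of `A`
is among the former, so `Δ_{A'} ≤ Δ_A - 1`, and symmetrically for `B`. A vertex of degree
`d ≤ Δ_A` whose degree drops gains `1/d - 1/(d+1) ≥ 1/(Δ_A (Δ_A + 1))` in the potential, and
the total gain outweighs the loss of `a` and `b` because the difference is
`(Δ_B - Δ_A)² (Δ_A + Δ_B + 1) / (Δ_A Δ_B (Δ_A + 1) (Δ_B + 1)) ≥ 0`.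
-/

open Finset

lemma one_div_add_one_div_mul_le_one_div {x p : ℝ} (hx : 0 < x) (hxp : x ≤ p) :
    1 / (x + 1) + 1 / (p * (p + 1)) ≤ 1 / x := by
  have hp : 0 < p := hx.trans_le hxp
  have hsplit : 1 / x = 1 / (x + 1) + 1 / (x * (x + 1)) := by field_simp
  rw [hsplit]
  gcongr

lemma two_mul_one_div_add_one_div_le {p q : ℝ} (hp : 0 < p) (hq : 0 < q) :
    2 * (1 / (p + 1) + 1 / (q + 1))
      ≤ 1 / p + 1 / q + (q - 1) / (p * (p + 1)) + (p - 1) / (q * (q + 1)) := by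
  have hgap : 1 / p + 1 / q + (q - 1) / (p * (p + 1)) + (p - 1) / (q * (q + 1))
      - 2 * (1 / (p + 1) + 1 / (q + 1))
      = (q - p) ^ 2 * (p + q + 1) / (p * q * (p + 1) * (q + 1)) := by
    field_simp; ring
  have : 0 ≤ (q - p) ^ 2 * (p + q + 1) / (p * q * (p + 1) * (q + 1)) := by positivity
  linarith

lemma one_div_succ_add_ite_le (P : Prop) [Decidable P] {k m p : ℕ}
    (hkm : k + (if P then 1 else 0) = m) (hmp : m ≤ p) :
    (1 : ℝ) / (m + 1) + (if P then (1 : ℝ) / (p * (p + 1)) else 0) ≤ 1 / (k + 1) := by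
  split_ifs at hkm ⊢
  · subst hkm
    push_cast
    exact one_div_add_one_div_mul_le_one_div (by positivity) (by exact_mod_cast hmp)
  · simp_all

lemma sum_one_div_succ_add_card_filter_le {ι : Type*} {s : Finset ι} {d d' : ι → ℕ}
    (P : ι → Prop) [DecidablePred P] {p : ℕ}
    (hd : ∀ v ∈ s, d' v + (if P v then 1 else 0) = d v) (hp : ∀ v ∈ s, d v ≤ p) :
    ∑ v ∈ s, (1 : ℝ) / (d v + 1) + #(s.filter P) / (p * (p + 1))
      ≤ ∑ v ∈ s, (1 : ℝ) / (d' v + 1) := by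
  rw [div_eq_mul_one_div, ← nsmul_eq_mul, ← sum_const, sum_filter, ← sum_add_distrib]
  exact sum_le_sum fun v hv => one_div_succ_add_ite_le (P v) (hd v hv) (hp v hv)

namespace SimpleGraph

variable {V : Type*} [Fintype V] [DecidableEq V] {G : SimpleGraph V} [DecidableRel G.Adj]
  {A B : Finset V}

lemma IsBipartiteWith.card_filter_adj_add_ite (h : G.IsBipartiteWith ↑A ↑B) {s : Finset V}
    (hs : s ⊆ A) {v : V} (hv : v ∈ A) (b : V) :
    #((s ∪ B.erase b).filter (G.Adj v)) + (if G.Adj v b then 1 else 0) = G.degree v := by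
  have hs_empty : s.filter (G.Adj v) = ∅ :=
    filter_false_of_mem fun u hu hadj =>
      Finset.disjoint_left.mp (by exact_mod_cast h.disjoint) (hs hu)
        (h.mem_of_mem_adj (by exact_mod_cast hv) hadj)
  rw [filter_union, hs_empty, empty_union, filter_erase,
    ← isBipartiteWith_neighborFinset h hv, ← card_neighborFinset_eq_degree]
  split_ifs with hvb
  · exact card_erase_add_one ((mem_neighborFinset G v b).mpr hvb)
  · rw [erase_eq_of_notMem (by simpa using hvb), add_zero]

lemma IsBipartiteWith.card_filter_erase_adj_add_one (h : G.IsBipartiteWith ↑A ↑B) {a b : V}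
    (hb : b ∈ B) (hab : G.Adj a b) :
    #((A.erase a).filter (G.Adj · b)) + 1 = G.degree b := by
  rw [filter_erase, ← isBipartiteWith_neighborFinset' h hb, ← card_neighborFinset_eq_degree]
  exact card_erase_add_one (by simpa using hab.symm)

variable {a b : V} {d' : V → ℕ}

lemma IsBipartiteWith.sup_erase_le_sup_sub_one (h : G.IsBipartiteWith ↑A ↑B)
    (hmax : ∀ v ∈ A, G.degree v = A.sup (fun v => G.degree v) → G.Adj v b)
    (hd' : ∀ v, d' v = #((A.erase a ∪ B.erase b).filter (G.Adj v))) :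
    (A.erase a).sup d' ≤ A.sup (fun v => G.degree v) - 1 := by
  refine Finset.sup_le fun v hv => Nat.le_sub_one_of_lt ?_
  have hvA := mem_of_mem_erase hv
  have hdeg := h.card_filter_adj_add_ite (erase_subset a A) hvA b
  rw [← hd'] at hdeg
  have hle : G.degree v ≤ A.sup (fun v => G.degree v) := le_sup (f := fun v => G.degree v) hvA
  split_ifs at hdeg with hvb
  · omega
  · have : G.degree v ≠ A.sup (fun v => G.degree v) := fun heq => hvb (hmax v hvA heq)
    omega

lemma IsBipartiteWith.sum_erase_add_le (h : G.IsBipartiteWith ↑A ↑B) (hb : b ∈ B)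
    (hab : G.Adj a b) (hd' : ∀ v, d' v = #((A.erase a ∪ B.erase b).filter (G.Adj v))) :
    ∑ v ∈ A.erase a, (1 : ℝ) / (G.degree v + 1)
        + ((G.degree b : ℝ) - 1)
          / ((A.sup fun v => G.degree v : ℕ) * ((A.sup fun v => G.degree v : ℕ) + 1))
      ≤ ∑ v ∈ A.erase a, (1 : ℝ) / (d' v + 1) := by
  have hcard : (#((A.erase a).filter (G.Adj · b)) : ℝ) = G.degree b - 1 := by
    rw [← h.card_filter_erase_adj_add_one hb hab]
    push_cast
    ring
  rw [← hcard]
  refine sum_one_div_succ_add_card_filter_le (G.Adj · b) (fun v hv => ?_)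
    (fun v hv => le_sup (f := fun v => G.degree v) (mem_of_mem_erase hv))
  rw [hd']
  exact h.card_filter_adj_add_ite (erase_subset a A) (mem_of_mem_erase hv) b

end SimpleGraph

theorem potential_case_adjacent_general {V : Type*} [Fintype V] [DecidableEq V]
    (G : SimpleGraph V) [DecidableRel G.Adj] (A B : Finset V)
    (hdisj : Disjoint A B)
    (hbip : ∀ u v, G.Adj u v → (u ∈ A ∧ v ∈ B) ∨ (u ∈ B ∧ v ∈ A))
    (hmaxadj : ∀ a' ∈ A, G.degree a' = A.sup (fun v => G.degree v) →
      ∀ b' ∈ B, G.degree b' = B.sup (fun v => G.degree v) → G.Adj a' b')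
    (a : V) (ha : a ∈ A) (hda : G.degree a = A.sup (fun v => G.degree v))
    (b : V) (hb : b ∈ B) (hdb : G.degree b = B.sup (fun v => G.degree v))
    (d' : V → ℕ)
    (hd' : ∀ v, d' v = ((A.erase a ∪ B.erase b).filter (fun u => G.Adj v u)).card) :
    (A.erase a).sup d' ≤ A.sup (fun v => G.degree v) - 1 ∧
    (B.erase b).sup d' ≤ B.sup (fun v => G.degree v) - 1 ∧
    (1 / 2 : ℝ) * ((1 : ℝ) / ((A.sup (fun v => G.degree v) : ℕ) + 1)
        + (1 : ℝ) / ((B.sup (fun v => G.degree v) : ℕ) + 1)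
        + ∑ v ∈ A ∪ B, (1 : ℝ) / (G.degree v + 1))
      ≤ (1 / 2 : ℝ) * ((1 : ℝ) / (((A.erase a).sup d' : ℕ) + 1)
        + (1 : ℝ) / (((B.erase b).sup d' : ℕ) + 1)
        + ∑ v ∈ A.erase a ∪ B.erase b, (1 : ℝ) / (d' v + 1)) := by
  have hG : G.IsBipartiteWith ↑A ↑B :=
    ⟨by exact_mod_cast hdisj, fun u v huv => by simpa using hbip u v huv⟩
  have hab : G.Adj a b := hmaxadj a ha hda b hb hdb
  have hd'B : ∀ v, d' v = #((B.erase b ∪ A.erase a).filter (G.Adj v)) := fun v => by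
    rw [union_comm]; exact hd' v
  have hsupA := hG.sup_erase_le_sup_sub_one
    (fun v hv hvmax => hmaxadj v hv hvmax b hb hdb) hd'
  have hsupB := hG.symm.sup_erase_le_sup_sub_one
    (fun v hv hvmax => (hmaxadj a ha hda v hv hvmax).symm) hd'B
  refine ⟨hsupA, hsupB, ?_⟩
  have hsumA := hG.sum_erase_add_le hb hab hd'
  have hsumB := hG.symm.sum_erase_add_le ha hab.symm hd'B
  set p := A.sup (fun v => G.degree v)
  set q := B.sup (fun v => G.degree v)
  have hp : 0 < p := hda ▸ G.degree_pos_iff_exists_adj a |>.mpr ⟨b, hab⟩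
  have hq : 0 < q := hdb ▸ G.degree_pos_iff_exists_adj b |>.mpr ⟨a, hab.symm⟩
  have hp' : (1 : ℝ) / p ≤ 1 / (((A.erase a).sup d' : ℕ) + 1) :=
    one_div_le_one_div_of_le (by positivity) (by exact_mod_cast (by omega))
  have hq' : (1 : ℝ) / q ≤ 1 / (((B.erase b).sup d' : ℕ) + 1) :=
    one_div_le_one_div_of_le (by positivity) (by exact_mod_cast (by omega))
  have hkey := two_mul_one_div_add_one_div_le (p := p) (q := q) (by positivity) (by positivity)
  rw [hda] at hsumB
  rw [hdb] at hsumA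
  rw [sum_union hdisj, ← add_sum_erase A _ ha, ← add_sum_erase B _ hb, hda, hdb,
    sum_union (hdisj.mono (erase_subset a A) (erase_subset b B))]
  linarith

/-- Case 2 of the induction. Let `G` be an `n × n` bipartite graph (`n ≥ 2`)
with parts `A`, `B` and maximum side degrees `Δ_A, Δ_B ≥ 1`, such that every maximum-degree
vertex of `A` is adjacent to every maximum-degree vertex of `B`. Fix maximum-degree vertices
`a ∈ A`, `b ∈ B`, and let `H` be the induced subgraph on `(A \ {a}) ∪ (B \ {b})` with
degrees `d'` and side maximum degrees `Δ_{A'}, Δ_{B'}`. Then `Δ_{A'} ≤ Δ_A − 1`,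
`Δ_{B'} ≤ Δ_B − 1`, and the potential of `H` is at least the potential of `G`. -/
theorem potential_case_adjacent {V : Type*} [Fintype V] [DecidableEq V]
    (G : SimpleGraph V) [DecidableRel G.Adj] (n : ℕ) (hn : 2 ≤ n) (A B : Finset V)
    (hdisj : Disjoint A B) (hcover : A ∪ B = Finset.univ)
    (hbip : ∀ u v, G.Adj u v → (u ∈ A ∧ v ∈ B) ∨ (u ∈ B ∧ v ∈ A))
    (hA : A.card = n) (hB : B.card = n)
    (hΔA : 1 ≤ A.sup (fun v => G.degree v)) (hΔB : 1 ≤ B.sup (fun v => G.degree v))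
    (hmaxadj : ∀ a' ∈ A, G.degree a' = A.sup (fun v => G.degree v) →
      ∀ b' ∈ B, G.degree b' = B.sup (fun v => G.degree v) → G.Adj a' b')
    (a : V) (ha : a ∈ A) (hda : G.degree a = A.sup (fun v => G.degree v))
    (b : V) (hb : b ∈ B) (hdb : G.degree b = B.sup (fun v => G.degree v))
    (d' : V → ℕ)
    (hd' : ∀ v, d' v = ((A.erase a ∪ B.erase b).filter (fun u => G.Adj v u)).card) :
    (A.erase a).sup d' ≤ A.sup (fun v => G.degree v) - 1 ∧
    (B.erase b).sup d' ≤ B.sup (fun v => G.degree v) - 1 ∧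
    (1 / 2 : ℝ) * ((1 : ℝ) / ((A.sup (fun v => G.degree v) : ℕ) + 1)
        + (1 : ℝ) / ((B.sup (fun v => G.degree v) : ℕ) + 1)
        + ∑ v ∈ A ∪ B, (1 : ℝ) / (G.degree v + 1))
      ≤ (1 / 2 : ℝ) * ((1 : ℝ) / (((A.erase a).sup d' : ℕ) + 1)
        + (1 : ℝ) / (((B.erase b).sup d' : ℕ) + 1)
        + ∑ v ∈ A.erase a ∪ B.erase b, (1 : ℝ) / (d' v + 1)) :=
  potential_case_adjacent_general G A B hdisj hbip hmaxadj a ha hda b hb hdb d' hd'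
end

section
/- Let d ≥ 1 be an integer, let G be a bipartite graph with parts A and B, each of size n, and let v be a vertex of G with 1 ≤ d(v) ≤ d. Let G' be the graph obtained from G by deleting all edges incident to v. Then β_d(G) ≥ β_d(G'). -/
open Finset

/-- `degenBiholeNumber d G A B` is `β_d(G)`: the largest `k` such that there are `S ⊆ A`,
`T ⊆ B` with `|S| = |T| = k` and the subgraph of `G` induced on `S ∪ T` is `d`-degenerate,
i.e. every nonempty subset `s` of `S ∪ T` contains a vertex of degree at most `d` in the
subgraph induced on `s`. -/
noncomputable def degenBiholeNumber {V : Type*} [DecidableEq V] (d : ℕ)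
    (G : SimpleGraph V) [DecidableRel G.Adj] (A B : Finset V) : ℕ :=
  sSup {k | ∃ S T : Finset V, S ⊆ A ∧ T ⊆ B ∧ S.card = k ∧ T.card = k ∧
    ∀ s : Finset V, s ⊆ S ∪ T → s.Nonempty →
      ∃ v ∈ s, (s.filter (fun u => G.Adj v u)).card ≤ d}

section

variable {V : Type*} [DecidableEq V]

def IsDegenerateOn (d : ℕ) (G : SimpleGraph V) [DecidableRel G.Adj] (U : Finset V) : Prop :=
  ∀ s ⊆ U, s.Nonempty → ∃ w ∈ s, #{u ∈ s | G.Adj w u} ≤ d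

theorem degenBiholeNumber_mono {d : ℕ} {G H : SimpleGraph V} [DecidableRel G.Adj]
    [DecidableRel H.Adj] {A B : Finset V}
    (h : ∀ U, IsDegenerateOn d G U → IsDegenerateOn d H U) :
    degenBiholeNumber d G A B ≤ degenBiholeNumber d H A B := by
  apply csSup_le_csSup
  · refine ⟨#A, ?_⟩
    rintro k ⟨S, -, hSA, -, rfl, -⟩
    exact card_le_card hSA
  · exact ⟨0, ∅, ∅, empty_subset _, empty_subset _, rfl, rfl, fun s hs hne => by
      simp_all [subset_empty]⟩
  · rintro k ⟨S, T, hSA, hTB, hS, hT, hdeg⟩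
    exact ⟨S, T, hSA, hTB, hS, hT, h _ hdeg⟩

/-- A set containing `v` has `v` itself as its low-degree vertex; a set avoiding `v` sees no
edge of `G` that is not in `G'`. -/
theorem IsDegenerateOn.of_adj_off_vertex {d : ℕ} {G G' : SimpleGraph V} [DecidableRel G.Adj]
    [DecidableRel G'.Adj] {U : Finset V} {v : V} [Fintype (G.neighborSet v)]
    (hvd : G.degree v ≤ d) (hG : ∀ u w, u ≠ v → w ≠ v → G.Adj u w → G'.Adj u w)
    (hU : IsDegenerateOn d G' U) : IsDegenerateOn d G U := by
  intro s hs hne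
  by_cases hvs : v ∈ s
  · refine ⟨v, hvs, le_trans (card_le_card fun u hu => ?_) hvd⟩
    exact (G.mem_neighborFinset v u).mpr (mem_filter.mp hu).2
  · obtain ⟨w, hw, hwd⟩ := hU s hs hne
    have hne_v : ∀ x ∈ s, x ≠ v := fun x hx hxv => hvs (hxv ▸ hx)
    refine ⟨w, hw, le_trans (card_le_card fun u hu => ?_) hwd⟩
    rw [mem_filter] at hu ⊢
    exact ⟨hu.1, hG w u (hne_v w hw) (hne_v u hu.1) hu.2⟩

end

theorem degen_bihole_delete_low_degree_vertex_general {V : Type*} [Fintype V] [DecidableEq V]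
    (d : ℕ)
    (G : SimpleGraph V) [DecidableRel G.Adj] (A B : Finset V)
    (v : V) (hvd : G.degree v ≤ d)
    (G' : SimpleGraph V) [DecidableRel G'.Adj]
    (hG' : ∀ u w, G'.Adj u w ↔ (G.Adj u w ∧ u ≠ v ∧ w ≠ v)) :
    degenBiholeNumber d G' A B ≤ degenBiholeNumber d G A B :=
  degenBiholeNumber_mono fun _ =>
    IsDegenerateOn.of_adj_off_vertex hvd fun u w hu hw huw => (hG' u w).mpr ⟨huw, hu, hw⟩

/-- Let `d ≥ 1`, let `G` be an `n × n` bipartite graph with parts `A`, `B`,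
let `v` be a vertex with `1 ≤ d(v) ≤ d`, and let `G'` be obtained from `G` by deleting all
edges incident to `v`. Then `β_d(G) ≥ β_d(G')`. -/
theorem degen_bihole_delete_low_degree_vertex {V : Type*} [Fintype V] [DecidableEq V]
    (d : ℕ) (hd : 1 ≤ d)
    (G : SimpleGraph V) [DecidableRel G.Adj] (n : ℕ) (A B : Finset V)
    (hdisj : Disjoint A B) (hcover : A ∪ B = Finset.univ)
    (hbip : ∀ u w, G.Adj u w → (u ∈ A ∧ w ∈ B) ∨ (u ∈ B ∧ w ∈ A))
    (hA : A.card = n) (hB : B.card = n)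
    (v : V) (hv1 : 1 ≤ G.degree v) (hvd : G.degree v ≤ d)
    (G' : SimpleGraph V) [DecidableRel G'.Adj]
    (hG' : ∀ u w, G'.Adj u w ↔ (G.Adj u w ∧ u ≠ v ∧ w ≠ v)) :
    degenBiholeNumber d G' A B ≤ degenBiholeNumber d G A B :=
  degen_bihole_delete_low_degree_vertex_general d G A B v hvd G' hG'
end
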